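/- arXiv:2209.09948 — 2 statements merged into one kernel-verified Lean document; each statement's English description precedes it below -/
import Mathlib

section
/- Let g₁,…,g_k (k ≥ 1) be pseudomonomials in R, with g_j = ∏_{i∈σ_j} xᵢ · ∏_{i∈τ_j} (1−xᵢ), such that g_{j₁} does not divide g_{j₂} whenever j₁ ≠ j₂, and let J be the ideal of R generated by g₁,…,g_k. Suppose there exist j₁ ≠ j₂ and an index i such that the set of indices shared by g_{j₁} and g_{j₂} is exactly {i}, and such that no g_j (1 ≤ j ≤ k) divides the pseudomonomial h = ∏_{ℓ∈(σ_{j₁}∪σ_{j₂})∖{i}} x_ℓ · ∏_{ℓ∈(τ_{j₁}∪τ_{j₂})∖{i}} (1−x_ℓ). Then {g₁,…,g_k} ≠ CF(J); that is, the presentation of J by the generators g₁,…,g_k is not in canonical form. -/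
open MvPolynomial

/-- The pseudomonomial `∏_{i∈σ} xᵢ · ∏_{i∈τ} (1 - xᵢ)` in `F₂[x₁,…,xₙ]`. -/
noncomputable def psm (n : ℕ) (σ τ : Finset (Fin n)) : MvPolynomial (Fin n) (ZMod 2) :=
  (∏ i ∈ σ, X i) * ∏ i ∈ τ, (1 - X i)

/-- A polynomial of `F₂[x₁,…,xₙ]` is a pseudomonomial if it has the form
`∏_{i∈σ} xᵢ · ∏_{i∈τ} (1 - xᵢ)` for disjoint `σ τ`. -/
def IsPseudomonomial {n : ℕ} (f : MvPolynomial (Fin n) (ZMod 2)) : Prop :=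
  ∃ σ τ : Finset (Fin n), Disjoint σ τ ∧ f = psm n σ τ

/-- The canonical form of an ideal `J`: the set of minimal pseudomonomials of `J`,
i.e. pseudomonomials `f ∈ J` such that no pseudomonomial `g ≠ f` dividing `f` lies in `J`. -/
def CF {n : ℕ} (J : Ideal (MvPolynomial (Fin n) (ZMod 2))) :
    Set (MvPolynomial (Fin n) (ZMod 2)) :=
  {f | IsPseudomonomial f ∧ f ∈ J ∧
    ∀ g : MvPolynomial (Fin n) (ZMod 2), IsPseudomonomial g → g ∣ f → g ≠ f → g ∉ J}

lemma psm_ne_zero {n : ℕ} {σ τ : Finset (Fin n)} (h : Disjoint σ τ) : psm n σ τ ≠ 0 := by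
  intro h0
  have h1 := congrArg (eval (fun ℓ => if ℓ ∈ σ then (1:ZMod 2) else 0)) h0
  rw [map_zero, psm, map_mul, map_prod, map_prod,
      Finset.prod_eq_one (fun ℓ hℓ => by rw [eval_X, if_pos hℓ]),
      Finset.prod_eq_one (fun ℓ hℓ => by
        rw [map_sub, map_one, eval_X,
          if_neg (fun hs => (Finset.disjoint_left.mp h hs hℓ)), sub_zero]),
      one_mul] at h1
  exact one_ne_zero h1

lemma pseudo_ne_zero {n : ℕ} {f : MvPolynomial (Fin n) (ZMod 2)} (h : IsPseudomonomial f) :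
    f ≠ 0 := by
  obtain ⟨σ, τ, hd, rfl⟩ := h
  exact psm_ne_zero hd

lemma units_trivial : ∀ (n : ℕ) (q : MvPolynomial (Fin n) (ZMod 2)), IsUnit q → q = 1 := by
  have hz : ∀ a : ZMod 2, a ≠ 0 → a = 1 := by decide
  intro n
  induction n with
  | zero =>
    intro q hq
    set e := MvPolynomial.isEmptyAlgEquiv (ZMod 2) (Fin 0)
    have h1 : e q = 1 := hz _ (hq.map e).ne_zero
    have := congrArg e.symm h1
    rwa [e.symm_apply_apply, map_one] at this
  | succ m ih =>
    intro q hq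
    set e := MvPolynomial.finSuccEquiv (ZMod 2) m
    have hu : IsUnit (e q) := hq.map e
    have hdeg : (e q).natDegree = 0 := Polynomial.natDegree_eq_zero_of_isUnit hu
    have hC : e q = Polynomial.C ((e q).coeff 0) := (Polynomial.eq_C_of_natDegree_eq_zero hdeg)
    have hcu : IsUnit ((e q).coeff 0) := by
      rw [hC] at hu
      exact Polynomial.isUnit_C.mp hu
    have h1 : e q = 1 := by rw [hC, ih _ hcu, map_one]
    have := congrArg e.symm h1
    rwa [e.symm_apply_apply, map_one] at this

lemma descent {n k : ℕ} (g : Fin k → MvPolynomial (Fin n) (ZMod 2))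
    (hCF : Set.range g = CF (Ideal.span (Set.range g))) :
    ∀ f : MvPolynomial (Fin n) (ZMod 2), IsPseudomonomial f →
      f ∈ Ideal.span (Set.range g) → ∃ j, g j ∣ f := by
  intro f
  refine wellFounded_dvdNotUnit.induction
    (C := fun f : MvPolynomial (Fin n) (ZMod 2) => IsPseudomonomial f →
      f ∈ Ideal.span (Set.range g) → ∃ j, g j ∣ f) f ?_
  clear f
  intro f ih hf hfJ
  ·
    by_cases hmem : f ∈ CF (Ideal.span (Set.range g))
    · rw [← hCF] at hmem
      obtain ⟨j, hj⟩ := hmem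
      exact ⟨j, hj ▸ dvd_refl f⟩
    · have hx : ¬ ∀ g' : MvPolynomial (Fin n) (ZMod 2),
          IsPseudomonomial g' → g' ∣ f → g' ≠ f → g' ∉ Ideal.span (Set.range g) := fun hmin =>
        hmem ⟨hf, hfJ, hmin⟩
      push_neg at hx
      obtain ⟨g', hg'p, hg'dvd, hg'ne, hg'J⟩ := hx
      obtain ⟨q, hq⟩ := hg'dvd
      have hqnu : ¬ IsUnit q := by
        intro hu
        rw [units_trivial n q hu, mul_one] at hq
        exact hg'ne hq.symm
      obtain ⟨j, hj⟩ := ih g' ⟨pseudo_ne_zero hg'p, q, hqnu, hq⟩ hg'p hg'J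
      exact ⟨j, hj.trans ⟨q, hq⟩⟩

lemma key_identity {n : ℕ} (σ₁ τ₁ σ₂ τ₂ : Finset (Fin n)) (i : Fin n)
    (hd1 : Disjoint σ₁ τ₁) (hd2 : Disjoint σ₂ τ₂)
    (hi1 : i ∈ σ₁) (hi2 : i ∈ τ₂) :
    ∃ A B : MvPolynomial (Fin n) (ZMod 2),
      psm n ((σ₁ ∪ σ₂) \ {i}) ((τ₁ ∪ τ₂) \ {i}) = A * psm n σ₁ τ₁ + B * psm n σ₂ τ₂ := by
  classical
  set S := (σ₁ ∪ σ₂) \ {i} with hS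
  set T := (τ₁ ∪ τ₂) \ {i} with hT
  have hi1' : i ∉ τ₁ := Finset.disjoint_left.mp hd1 hi1
  have hi2' : i ∉ σ₂ := Finset.disjoint_right.mp hd2 hi2
  have hsubS1 : σ₁ \ {i} ⊆ S := Finset.sdiff_subset_sdiff Finset.subset_union_left le_rfl
  have hsubT1 : τ₁ ⊆ T := Finset.subset_sdiff.mpr
    ⟨Finset.subset_union_left, Finset.disjoint_singleton_right.mpr hi1'⟩
  have hsubS2 : σ₂ ⊆ S := Finset.subset_sdiff.mpr
    ⟨Finset.subset_union_right, Finset.disjoint_singleton_right.mpr hi2'⟩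
  have hsubT2 : τ₂ \ {i} ⊆ T := Finset.sdiff_subset_sdiff Finset.subset_union_right le_rfl
  refine ⟨psm n (S \ (σ₁ \ {i})) (T \ τ₁), psm n (S \ σ₂) (T \ (τ₂ \ {i})), ?_⟩
  have e1 : (∏ ℓ ∈ σ₁, (X ℓ : MvPolynomial (Fin n) (ZMod 2)))
      = X i * ∏ ℓ ∈ σ₁ \ {i}, X ℓ := by
    rw [← Finset.erase_eq]
    exact (Finset.mul_prod_erase σ₁ (fun ℓ => X ℓ) hi1).symm
  have e2 : (∏ ℓ ∈ τ₂, ((1 : MvPolynomial (Fin n) (ZMod 2)) - X ℓ))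
      = (1 - X i) * ∏ ℓ ∈ τ₂ \ {i}, (1 - X ℓ) := by
    rw [← Finset.erase_eq]
    exact (Finset.mul_prod_erase τ₂ (fun ℓ => 1 - X ℓ) hi2).symm
  have c1 : psm n (S \ (σ₁ \ {i})) (T \ τ₁) * psm n σ₁ τ₁ = X i * psm n S T := by
    rw [psm, psm, psm, e1, ← Finset.prod_sdiff hsubS1, ← Finset.prod_sdiff hsubT1]
    ring
  have c2 : psm n (S \ σ₂) (T \ (τ₂ \ {i})) * psm n σ₂ τ₂ = (1 - X i) * psm n S T := by
    rw [psm, psm, psm, e2, ← Finset.prod_sdiff hsubS2, ← Finset.prod_sdiff hsubT2]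
    ring
  rw [c1, c2]; ring

/-- Theorem (main theorem, negative direction): if some pair of generators shares exactly one
index `i` and no generator divides `[g_{j₁}g_{j₂}]/(xᵢyᵢ)`, the presentation is not in
canonical form. -/
theorem stmt0 {n k : ℕ} (hn : 0 < n) (hk : 1 ≤ k)
    (σ τ : Fin k → Finset (Fin n))
    (hdisj : ∀ j, Disjoint (σ j) (τ j))
    (g : Fin k → MvPolynomial (Fin n) (ZMod 2))
    (hg : ∀ j, g j = psm n (σ j) (τ j))
    (hnd : ∀ j₁ j₂ : Fin k, j₁ ≠ j₂ → ¬ g j₁ ∣ g j₂)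
    (j₁ j₂ : Fin k) (hne : j₁ ≠ j₂) (i : Fin n)
    (hshare : (σ j₁ ∩ τ j₂) ∪ (σ j₂ ∩ τ j₁) = {i})
    (hnodiv : ∀ j : Fin k,
      ¬ g j ∣ psm n ((σ j₁ ∪ σ j₂) \ {i}) ((τ j₁ ∪ τ j₂) \ {i})) :
    Set.range g ≠ CF (Ideal.span (Set.range g)) := by
  classical
  intro hCF
  set h : MvPolynomial (Fin n) (ZMod 2) :=
    psm n ((σ j₁ ∪ σ j₂) \ {i}) ((τ j₁ ∪ τ j₂) \ {i}) with hh
  -- h is a pseudomonomial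
  have hdisjST : Disjoint ((σ j₁ ∪ σ j₂) \ {i}) ((τ j₁ ∪ τ j₂) \ {i}) := by
    rw [Finset.disjoint_left]
    intro a haS haT
    simp only [Finset.mem_sdiff, Finset.mem_union, Finset.mem_singleton] at haS haT
    have h1 := Finset.disjoint_left.mp (hdisj j₁)
    have h2 := Finset.disjoint_left.mp (hdisj j₂)
    have hsh : ∀ b : Fin n, (b ∈ σ j₁ ∧ b ∈ τ j₂) ∨ (b ∈ σ j₂ ∧ b ∈ τ j₁) → b = i := by
      intro b hb
      have : b ∈ (σ j₁ ∩ τ j₂) ∪ (σ j₂ ∩ τ j₁) := by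
        simp only [Finset.mem_union, Finset.mem_inter]; exact hb
      rw [hshare, Finset.mem_singleton] at this; exact this
    rcases haS.1 with h | h <;> rcases haT.1 with h' | h'
    · exact h1 h h'
    · exact haS.2 (hsh a (Or.inl ⟨h, h'⟩))
    · exact haS.2 (hsh a (Or.inr ⟨h, h'⟩))
    · exact h2 h h'
  have hp : IsPseudomonomial h := ⟨_, _, hdisjST, rfl⟩
  -- h ∈ J
  have hi : i ∈ (σ j₁ ∩ τ j₂) ∪ (σ j₂ ∩ τ j₁) := by
    rw [hshare]; exact Finset.mem_singleton_self i
  have hmem : h ∈ Ideal.span (Set.range g) := by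
    rw [Finset.mem_union, Finset.mem_inter, Finset.mem_inter] at hi
    rcases hi with ⟨hi1, hi2⟩ | ⟨hi1, hi2⟩
    · obtain ⟨A, B, hAB⟩ := key_identity (σ j₁) (τ j₁) (σ j₂) (τ j₂) i
        (hdisj j₁) (hdisj j₂) hi1 hi2
      rw [hh, hAB, ← hg, ← hg]
      exact Ideal.add_mem _
        (Ideal.mul_mem_left _ _ (Ideal.subset_span ⟨j₁, rfl⟩))
        (Ideal.mul_mem_left _ _ (Ideal.subset_span ⟨j₂, rfl⟩))
    · obtain ⟨A, B, hAB⟩ := key_identity (σ j₂) (τ j₂) (σ j₁) (τ j₁) i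
        (hdisj j₂) (hdisj j₁) hi1 hi2
      rw [Finset.union_comm (σ j₂) (σ j₁), Finset.union_comm (τ j₂) (τ j₁)] at hAB
      rw [hh, hAB, ← hg, ← hg]
      exact Ideal.add_mem _
        (Ideal.mul_mem_left _ _ (Ideal.subset_span ⟨j₂, rfl⟩))
        (Ideal.mul_mem_left _ _ (Ideal.subset_span ⟨j₁, rfl⟩))
  obtain ⟨j, hj⟩ := descent g hCF h hp hmem
  exact hnodiv j hj
end

section
/- Let g₁,…,g_k (k ≥ 1) be pseudomonomials in R, with g_j = ∏_{i∈σ_j} xᵢ · ∏_{i∈τ_j} (1−xᵢ), such that g_{j₁} does not divide g_{j₂} whenever j₁ ≠ j₂, and let J be the ideal of R generated by g₁,…,g_k. Assume that for every pair j₁ ≠ j₂ and every index i such that the set of indices shared by g_{j₁} and g_{j₂} is exactly {i}, there exists some 1 ≤ j₃ ≤ k such that g_{j₃} divides the pseudomonomial h = ∏_{ℓ∈(σ_{j₁}∪σ_{j₂})∖{i}} x_ℓ · ∏_{ℓ∈(τ_{j₁}∪τ_{j₂})∖{i}} (1−x_ℓ). Then CF(J) = {g₁,…,g_k}; that is, the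 presentation of J by the generators g₁,…,g_k is in canonical form. -/
open MvPolynomial

lemma eval_psm {n : ℕ} (v : Fin n → ZMod 2) (σ τ : Finset (Fin n)) :
    eval v (psm n σ τ) = (∏ i ∈ σ, v i) * ∏ i ∈ τ, (1 - v i) := by
  simp [psm]

lemma psm_dvd_psm {n : ℕ} {σ' τ' σ τ : Finset (Fin n)} (h1 : σ' ⊆ σ) (h2 : τ' ⊆ τ) :
    psm n σ' τ' ∣ psm n σ τ :=
  mul_dvd_mul (Finset.prod_dvd_prod_of_subset _ _ _ h1) (Finset.prod_dvd_prod_of_subset _ _ _ h2)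

lemma subset_of_psm_dvd {n : ℕ} {σ' τ' σ τ : Finset (Fin n)} (hστ : Disjoint σ τ)
    (h : psm n σ' τ' ∣ psm n σ τ) : σ' ⊆ σ ∧ τ' ⊆ τ := by
  constructor
  · intro i hi
    by_contra hiσ
    set v : Fin n → ZMod 2 := fun ℓ => if ℓ ∈ σ then 1 else 0 with hv
    have h1 : eval v (psm n σ τ) = 1 := by
      rw [eval_psm]
      rw [Finset.prod_eq_one, Finset.prod_eq_one, one_mul]
      · intro ℓ hℓ
        have : ℓ ∉ σ := fun c => (Finset.disjoint_left.mp hστ c) hℓ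
        simp [hv, this]
      · intro ℓ hℓ; simp [hv, hℓ]
    have h0 : eval v (psm n σ' τ') = 0 := by
      rw [eval_psm]
      apply mul_eq_zero_of_left
      apply Finset.prod_eq_zero hi
      simp [hv, hiσ]
    have := (map_dvd (eval v) h)
    rw [h0, h1, zero_dvd_iff] at this
    exact one_ne_zero this
  · intro i hi
    by_contra hiτ
    set v : Fin n → ZMod 2 := fun ℓ => if ℓ ∈ σ ∨ ℓ = i then 1 else 0 with hv
    have h1 : eval v (psm n σ τ) = 1 := by
      rw [eval_psm]
      rw [Finset.prod_eq_one, Finset.prod_eq_one, one_mul]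
      · intro ℓ hℓ
        have h1 : ℓ ∉ σ := fun c => (Finset.disjoint_left.mp hστ c) hℓ
        have h2 : ℓ ≠ i := fun c => hiτ (c ▸ hℓ)
        simp [hv, h1, h2]
      · intro ℓ hℓ; simp [hv, hℓ]
    have h0 : eval v (psm n σ' τ') = 0 := by
      rw [eval_psm]
      apply mul_eq_zero_of_right
      apply Finset.prod_eq_zero hi
      simp [hv]
    have := (map_dvd (eval v) h)
    rw [h0, h1, zero_dvd_iff] at this
    exact one_ne_zero this

def SatC {n : ℕ} (v : Fin n → ZMod 2) (c : Finset (Fin n) × Finset (Fin n)) : Prop :=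
  (∃ i ∈ c.1, v i = 0) ∨ (∃ i ∈ c.2, v i = 1)

lemma sat_lemma {n : ℕ} : ∀ (m : ℕ) (S : Finset (Fin n))
    (F : Finset (Finset (Fin n) × Finset (Fin n))), S.card ≤ m →
    (∀ c ∈ F, c.1 ∪ c.2 ⊆ S) →
    (∀ c ∈ F, (c.1 ∪ c.2).Nonempty) →
    (∀ c₁ ∈ F, ∀ c₂ ∈ F, ∀ i : Fin n, (c₁.1 ∩ c₂.2) ∪ (c₂.1 ∩ c₁.2) = {i} →
      ∃ c₃ ∈ F, c₃.1 ⊆ (c₁.1 ∪ c₂.1) \ {i} ∧ c₃.2 ⊆ (c₁.2 ∪ c₂.2) \ {i}) →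
    ∃ v : Fin n → ZMod 2, ∀ c ∈ F, SatC v c := by
  intro m
  induction m with
  | zero =>
    intro S F hcard hsub hne _
    refine ⟨0, fun c hc => absurd (hsub c hc) ?_⟩
    have hS : S = ∅ := Finset.card_eq_zero.mp (Nat.le_zero.mp hcard)
    intro hsub'
    obtain ⟨x, hx⟩ := hne c hc
    exact absurd (hsub' hx) (by simp [hS])
  | succ m ih =>
    intro S F hcard hsub hne hclosed
    rcases S.eq_empty_or_nonempty with hS | ⟨i, hiS⟩
    · refine ⟨0, fun c hc => absurd (hsub c hc) ?_⟩
      intro hsub'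
      obtain ⟨x, hx⟩ := hne c hc
      exact absurd (hsub' hx) (by simp [hS])
    · have hcard' : (S.erase i).card ≤ m := by
        rw [Finset.card_erase_of_mem hiS]
        omega
      by_cases hb : (∅, ({i} : Finset (Fin n))) ∈ F
      · -- must set v i = 1; show ({i}, ∅) ∉ F
        have hb' : (({i} : Finset (Fin n)), (∅ : Finset (Fin n))) ∉ F := by
          intro hmem
          obtain ⟨c₃, hc₃, h1, h2⟩ := hclosed _ hmem _ hb i (by simp)
          obtain ⟨x, hx⟩ := hne c₃ hc₃
          rcases Finset.mem_union.mp hx with hx | hx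
          · simpa using h1 hx
          · simpa using h2 hx
        set F' := (F.filter (fun c => i ∉ c.2)).image (fun c => (c.1.erase i, c.2)) with hF'
        have hmemF' : ∀ c ∈ F, i ∉ c.2 → (c.1.erase i, c.2) ∈ F' := by
          intro c hc hi
          exact Finset.mem_image.mpr ⟨c, Finset.mem_filter.mpr ⟨hc, hi⟩, rfl⟩
        obtain ⟨v', hv'⟩ := ih (S.erase i) F' hcard'
          (by
            rintro c' hc'
            obtain ⟨c, hc, rfl⟩ := Finset.mem_image.mp hc'
            have hcF := (Finset.mem_filter.mp hc).1
            have hci := (Finset.mem_filter.mp hc).2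
            intro ℓ hℓ
            simp only [Finset.mem_union, Finset.mem_erase] at hℓ
            rcases hℓ with ⟨hne', hℓ⟩ | hℓ
            · exact Finset.mem_erase.mpr ⟨hne', hsub c hcF (Finset.mem_union_left _ hℓ)⟩
            · refine Finset.mem_erase.mpr ⟨fun h => hci (h ▸ hℓ), hsub c hcF (Finset.mem_union_right _ hℓ)⟩)
          (by
            rintro c' hc'
            obtain ⟨c, hc, rfl⟩ := Finset.mem_image.mp hc'
            have hcF := (Finset.mem_filter.mp hc).1
            have hci := (Finset.mem_filter.mp hc).2
            rw [Finset.nonempty_iff_ne_empty]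
            intro hemp
            rw [Finset.union_eq_empty] at hemp
            have h2 : c.2 = ∅ := hemp.2
            have h1 : c.1 = ∅ ∨ c.1 = {i} := (Finset.erase_eq_empty_iff _ _).mp hemp.1
            rcases h1 with h1 | h1
            · obtain ⟨x, hx⟩ := hne c hcF
              rw [Finset.mem_union, h1, h2] at hx
              simp at hx
            · have : c = (({i} : Finset (Fin n)), (∅ : Finset (Fin n))) := Prod.ext h1 h2
              exact hb' (this ▸ hcF))
          (by
            rintro c₁' hc₁' c₂' hc₂' ℓ hshare
            obtain ⟨c₁, hc₁, rfl⟩ := Finset.mem_image.mp hc₁'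
            obtain ⟨c₂, hc₂, rfl⟩ := Finset.mem_image.mp hc₂'
            have hc₁F := (Finset.mem_filter.mp hc₁).1
            have hc₁i := (Finset.mem_filter.mp hc₁).2
            have hc₂F := (Finset.mem_filter.mp hc₂).1
            have hc₂i := (Finset.mem_filter.mp hc₂).2
            have key : (c₁.1 ∩ c₂.2) ∪ (c₂.1 ∩ c₁.2) = {ℓ} := by
              rw [← hshare]
              congr 1
              · ext x
                simp only [Finset.mem_inter, Finset.mem_erase]
                exact ⟨fun ⟨h1, h2⟩ => ⟨⟨fun he => hc₂i (he ▸ h2), h1⟩, h2⟩, fun ⟨⟨_, h1⟩, h2⟩ => ⟨h1, h2⟩⟩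
              · ext x
                simp only [Finset.mem_inter, Finset.mem_erase]
                exact ⟨fun ⟨h1, h2⟩ => ⟨⟨fun he => hc₁i (he ▸ h2), h1⟩, h2⟩, fun ⟨⟨_, h1⟩, h2⟩ => ⟨h1, h2⟩⟩
            obtain ⟨c₃, hc₃, h31, h32⟩ := hclosed c₁ hc₁F c₂ hc₂F ℓ key
            have hℓi : i ∉ c₃.2 := by
              intro hmem
              have := h32 hmem
              rw [Finset.mem_sdiff, Finset.mem_union] at this
              rcases this.1 with h | h
              · exact hc₁i h
              · exact hc₂i h
            refine ⟨(c₃.1.erase i, c₃.2), hmemF' c₃ hc₃ hℓi, ?_, ?_⟩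
            · intro x hx
              rw [Finset.mem_erase] at hx
              have h := h31 hx.2
              rw [Finset.mem_sdiff, Finset.mem_union] at h
              simp only [Finset.mem_sdiff, Finset.mem_union, Finset.mem_erase, Finset.mem_singleton]
              refine ⟨?_, by simpa using h.2⟩
              rcases h.1 with h' | h'
              · exact Or.inl ⟨hx.1, h'⟩
              · exact Or.inr ⟨hx.1, h'⟩
            · intro x hx
              have := h32 hx
              rw [Finset.mem_sdiff] at this
              exact Finset.mem_sdiff.mpr ⟨this.1, this.2⟩)
        refine ⟨Function.update v' i 1, ?_⟩
        intro c hc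
        by_cases hic : i ∈ c.2
        · exact Or.inr ⟨i, hic, Function.update_self _ _ _⟩
        · rcases hv' _ (hmemF' c hc hic) with ⟨ℓ, hℓ, hvℓ⟩ | ⟨ℓ, hℓ, hvℓ⟩
          · rw [Finset.mem_erase] at hℓ
            exact Or.inl ⟨ℓ, hℓ.2, by rw [Function.update_of_ne hℓ.1]; exact hvℓ⟩
          · have hℓi : ℓ ≠ i := fun h => hic (h ▸ hℓ)
            exact Or.inr ⟨ℓ, hℓ, by rw [Function.update_of_ne hℓi]; exact hvℓ⟩
      · -- set v i = 0
        set F' := (F.filter (fun c => i ∉ c.1)).image (fun c => (c.1, c.2.erase i)) with hF'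
        have hmemF' : ∀ c ∈ F, i ∉ c.1 → (c.1, c.2.erase i) ∈ F' := by
          intro c hc hi
          exact Finset.mem_image.mpr ⟨c, Finset.mem_filter.mpr ⟨hc, hi⟩, rfl⟩
        obtain ⟨v', hv'⟩ := ih (S.erase i) F' hcard'
          (by
            rintro c' hc'
            obtain ⟨c, hc, rfl⟩ := Finset.mem_image.mp hc'
            have hcF := (Finset.mem_filter.mp hc).1
            have hci := (Finset.mem_filter.mp hc).2
            intro ℓ hℓ
            simp only [Finset.mem_union, Finset.mem_erase] at hℓ
            rcases hℓ with hℓ | ⟨hne', hℓ⟩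
            · refine Finset.mem_erase.mpr ⟨fun h => hci (h ▸ hℓ), hsub c hcF (Finset.mem_union_left _ hℓ)⟩
            · exact Finset.mem_erase.mpr ⟨hne', hsub c hcF (Finset.mem_union_right _ hℓ)⟩)
          (by
            rintro c' hc'
            obtain ⟨c, hc, rfl⟩ := Finset.mem_image.mp hc'
            have hcF := (Finset.mem_filter.mp hc).1
            have hci := (Finset.mem_filter.mp hc).2
            rw [Finset.nonempty_iff_ne_empty]
            intro hemp
            rw [Finset.union_eq_empty] at hemp
            have h1 : c.1 = ∅ := hemp.1
            have h2 : c.2 = ∅ ∨ c.2 = {i} := (Finset.erase_eq_empty_iff _ _).mp hemp.2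
            rcases h2 with h2 | h2
            · obtain ⟨x, hx⟩ := hne c hcF
              rw [Finset.mem_union, h1, h2] at hx
              simp at hx
            · have : c = ((∅ : Finset (Fin n)), ({i} : Finset (Fin n))) := Prod.ext h1 h2
              exact hb (this ▸ hcF))
          (by
            rintro c₁' hc₁' c₂' hc₂' ℓ hshare
            obtain ⟨c₁, hc₁, rfl⟩ := Finset.mem_image.mp hc₁'
            obtain ⟨c₂, hc₂, rfl⟩ := Finset.mem_image.mp hc₂'
            have hc₁F := (Finset.mem_filter.mp hc₁).1
            have hc₁i := (Finset.mem_filter.mp hc₁).2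
            have hc₂F := (Finset.mem_filter.mp hc₂).1
            have hc₂i := (Finset.mem_filter.mp hc₂).2
            have key : (c₁.1 ∩ c₂.2) ∪ (c₂.1 ∩ c₁.2) = {ℓ} := by
              rw [← hshare]
              congr 1
              · ext x
                simp only [Finset.mem_inter, Finset.mem_erase]
                exact ⟨fun ⟨h1, h2⟩ => ⟨h1, fun he => hc₁i (he ▸ h1), h2⟩, fun ⟨h1, _, h2⟩ => ⟨h1, h2⟩⟩
              · ext x
                simp only [Finset.mem_inter, Finset.mem_erase]
                exact ⟨fun ⟨h1, h2⟩ => ⟨h1, fun he => hc₂i (he ▸ h1), h2⟩, fun ⟨h1, _, h2⟩ => ⟨h1, h2⟩⟩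
            obtain ⟨c₃, hc₃, h31, h32⟩ := hclosed c₁ hc₁F c₂ hc₂F ℓ key
            have hℓi : i ∉ c₃.1 := by
              intro hmem
              have := h31 hmem
              rw [Finset.mem_sdiff, Finset.mem_union] at this
              rcases this.1 with h | h
              · exact hc₁i h
              · exact hc₂i h
            refine ⟨(c₃.1, c₃.2.erase i), hmemF' c₃ hc₃ hℓi, ?_, ?_⟩
            · intro x hx
              have := h31 hx
              rw [Finset.mem_sdiff] at this
              exact Finset.mem_sdiff.mpr ⟨this.1, this.2⟩
            · intro x hx
              rw [Finset.mem_erase] at hx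
              have h := h32 hx.2
              rw [Finset.mem_sdiff, Finset.mem_union] at h
              simp only [Finset.mem_sdiff, Finset.mem_union, Finset.mem_erase, Finset.mem_singleton]
              refine ⟨?_, by simpa using h.2⟩
              rcases h.1 with h' | h'
              · exact Or.inl ⟨hx.1, h'⟩
              · exact Or.inr ⟨hx.1, h'⟩)
        refine ⟨Function.update v' i 0, ?_⟩
        intro c hc
        by_cases hic : i ∈ c.1
        · exact Or.inl ⟨i, hic, Function.update_self _ _ _⟩
        · rcases hv' _ (hmemF' c hc hic) with ⟨ℓ, hℓ, hvℓ⟩ | ⟨ℓ, hℓ, hvℓ⟩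
          · have hℓi : ℓ ≠ i := fun h => hic (h ▸ hℓ)
            exact Or.inl ⟨ℓ, hℓ, by rw [Function.update_of_ne hℓi]; exact hvℓ⟩
          · rw [Finset.mem_erase] at hℓ
            exact Or.inr ⟨ℓ, hℓ.2, by rw [Function.update_of_ne hℓ.1]; exact hvℓ⟩


lemma crux {n k : ℕ} (σ τ : Fin k → Finset (Fin n))
    (hdisj : ∀ j, Disjoint (σ j) (τ j))
    (g : Fin k → MvPolynomial (Fin n) (ZMod 2))
    (hg : ∀ j, g j = psm n (σ j) (τ j))
    (hmain : ∀ j₁ j₂ : Fin k, j₁ ≠ j₂ → ∀ i : Fin n,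
      (σ j₁ ∩ τ j₂) ∪ (σ j₂ ∩ τ j₁) = {i} →
      ∃ j₃ : Fin k, g j₃ ∣ psm n ((σ j₁ ∪ σ j₂) \ {i}) ((τ j₁ ∪ τ j₂) \ {i}))
    (a b : Finset (Fin n)) (hab : Disjoint a b)
    (hmem : psm n a b ∈ Ideal.span (Set.range g)) :
    ∃ j, g j ∣ psm n a b := by
  by_contra hno
  push_neg at hno
  set F : Finset (Finset (Fin n) × Finset (Fin n)) :=
    (Finset.univ.filter (fun j : Fin k => σ j ∩ b = ∅ ∧ τ j ∩ a = ∅)).image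
      (fun j => (σ j \ a, τ j \ b)) with hF
  have hmemF : ∀ j : Fin k, σ j ∩ b = ∅ → τ j ∩ a = ∅ → (σ j \ a, τ j \ b) ∈ F := by
    intro j h1 h2
    exact Finset.mem_image.mpr ⟨j, Finset.mem_filter.mpr ⟨Finset.mem_univ _, h1, h2⟩, rfl⟩
  obtain ⟨v', hv'⟩ := sat_lemma (Finset.univ : Finset (Fin n)).card Finset.univ F le_rfl
    (fun c _ => Finset.subset_univ _)
    (by
      rintro c hc
      obtain ⟨j, hj, rfl⟩ := Finset.mem_image.mp hc
      rw [Finset.nonempty_iff_ne_empty]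
      intro hemp
      rw [Finset.union_eq_empty] at hemp
      have h1 : σ j ⊆ a := Finset.sdiff_eq_empty_iff_subset.mp hemp.1
      have h2 : τ j ⊆ b := Finset.sdiff_eq_empty_iff_subset.mp hemp.2
      exact hno j (by rw [hg j]; exact psm_dvd_psm h1 h2))
    (by
      rintro c₁ hc₁ c₂ hc₂ i hshare
      obtain ⟨j₁, hj₁, rfl⟩ := Finset.mem_image.mp hc₁
      obtain ⟨j₂, hj₂, rfl⟩ := Finset.mem_image.mp hc₂
      have hj₁' := (Finset.mem_filter.mp hj₁).2
      have hj₂' := (Finset.mem_filter.mp hj₂).2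
      -- reduce shared sets to original shared sets
      have key : (σ j₁ ∩ τ j₂) ∪ (σ j₂ ∩ τ j₁) = {i} := by
        rw [← hshare]
        congr 1
        · ext x
          simp only [Finset.mem_inter, Finset.mem_sdiff]
          constructor
          · rintro ⟨h1, h2⟩
            refine ⟨⟨h1, fun hx => ?_⟩, h2, fun hx => ?_⟩
            · exact absurd (Finset.mem_inter.mpr ⟨h2, hx⟩) (by simp [hj₂'.2])
            · exact absurd (Finset.mem_inter.mpr ⟨h1, hx⟩) (by simp [hj₁'.1])
          · rintro ⟨⟨h1, _⟩, h2, _⟩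
            exact ⟨h1, h2⟩
        · ext x
          simp only [Finset.mem_inter, Finset.mem_sdiff]
          constructor
          · rintro ⟨h1, h2⟩
            refine ⟨⟨h1, fun hx => ?_⟩, h2, fun hx => ?_⟩
            · exact absurd (Finset.mem_inter.mpr ⟨h2, hx⟩) (by simp [hj₁'.2])
            · exact absurd (Finset.mem_inter.mpr ⟨h1, hx⟩) (by simp [hj₂'.1])
          · rintro ⟨⟨h1, _⟩, h2, _⟩
            exact ⟨h1, h2⟩
      have hjne : j₁ ≠ j₂ := by
        rintro rfl
        rw [Finset.disjoint_iff_inter_eq_empty.mp (hdisj j₁)] at key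
        simp only [Finset.union_empty] at key
        exact Finset.singleton_ne_empty i key.symm
      obtain ⟨j₃, hj₃⟩ := hmain j₁ j₂ hjne i key
      have hA : Disjoint ((σ j₁ ∪ σ j₂) \ {i}) ((τ j₁ ∪ τ j₂) \ {i}) := by
        rw [Finset.disjoint_left]
        intro x hx hx'
        rw [Finset.mem_sdiff, Finset.mem_union, Finset.mem_singleton] at hx hx'
        have hxi : x ≠ i := fun h => hx.2 (by simp [h])
        rcases hx.1 with h1 | h1 <;> rcases hx'.1 with h2 | h2
        · exact Finset.disjoint_left.mp (hdisj j₁) h1 h2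
        · refine hx.2 ?_
          have hm : x ∈ (σ j₁ ∩ τ j₂) ∪ (σ j₂ ∩ τ j₁) :=
            Finset.mem_union_left _ (Finset.mem_inter.mpr ⟨h1, h2⟩)
          rw [key] at hm
          simpa using hm
        · refine hx.2 ?_
          have hm : x ∈ (σ j₁ ∩ τ j₂) ∪ (σ j₂ ∩ τ j₁) :=
            Finset.mem_union_right _ (Finset.mem_inter.mpr ⟨h1, h2⟩)
          rw [key] at hm
          simpa using hm
        · exact Finset.disjoint_left.mp (hdisj j₂) h1 h2
      obtain ⟨hs3, ht3⟩ := subset_of_psm_dvd hA (by rw [← hg j₃]; exact hj₃)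
      have hσb : σ j₃ ∩ b = ∅ := by
        rw [Finset.eq_empty_iff_forall_notMem]
        intro x hx
        rw [Finset.mem_inter] at hx
        have := hs3 hx.1
        rw [Finset.mem_sdiff, Finset.mem_union] at this
        rcases this.1 with h | h
        · exact absurd (Finset.mem_inter.mpr ⟨h, hx.2⟩) (by simp [hj₁'.1])
        · exact absurd (Finset.mem_inter.mpr ⟨h, hx.2⟩) (by simp [hj₂'.1])
      have hτa : τ j₃ ∩ a = ∅ := by
        rw [Finset.eq_empty_iff_forall_notMem]
        intro x hx
        rw [Finset.mem_inter] at hx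
        have := ht3 hx.1
        rw [Finset.mem_sdiff, Finset.mem_union] at this
        rcases this.1 with h | h
        · exact absurd (Finset.mem_inter.mpr ⟨h, hx.2⟩) (by simp [hj₁'.2])
        · exact absurd (Finset.mem_inter.mpr ⟨h, hx.2⟩) (by simp [hj₂'.2])
      refine ⟨(σ j₃ \ a, τ j₃ \ b), hmemF j₃ hσb hτa, ?_, ?_⟩
      · intro x hx
        rw [Finset.mem_sdiff] at hx
        have h := hs3 hx.1
        rw [Finset.mem_sdiff, Finset.mem_union] at h
        simp only [Finset.mem_sdiff, Finset.mem_union]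
        refine ⟨?_, by simpa using h.2⟩
        rcases h.1 with h' | h'
        · exact Or.inl ⟨h', hx.2⟩
        · exact Or.inr ⟨h', hx.2⟩
      · intro x hx
        rw [Finset.mem_sdiff] at hx
        have h := ht3 hx.1
        rw [Finset.mem_sdiff, Finset.mem_union] at h
        simp only [Finset.mem_sdiff, Finset.mem_union]
        refine ⟨?_, by simpa using h.2⟩
        rcases h.1 with h' | h'
        · exact Or.inl ⟨h', hx.2⟩
        · exact Or.inr ⟨h', hx.2⟩)
  -- build the full assignment
  set v : Fin n → ZMod 2 := fun ℓ => if ℓ ∈ a then 1 else if ℓ ∈ b then 0 else v' ℓ with hv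
  have heval1 : eval v (psm n a b) = 1 := by
    rw [eval_psm]
    rw [Finset.prod_eq_one, Finset.prod_eq_one, one_mul]
    · intro ℓ hℓ
      have h1 : ℓ ∉ a := fun c => (Finset.disjoint_left.mp hab c) hℓ
      simp [hv, h1, hℓ]
    · intro ℓ hℓ; simp [hv, hℓ]
  have heval0 : ∀ j, eval v (g j) = 0 := by
    intro j
    rw [hg j, eval_psm]
    by_cases h1 : (σ j ∩ b).Nonempty
    · obtain ⟨ℓ, hℓ⟩ := h1
      rw [Finset.mem_inter] at hℓ
      apply mul_eq_zero_of_left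
      apply Finset.prod_eq_zero hℓ.1
      have : ℓ ∉ a := fun c => (Finset.disjoint_left.mp hab c) hℓ.2
      simp [hv, this, hℓ.2]
    by_cases h2 : (τ j ∩ a).Nonempty
    · obtain ⟨ℓ, hℓ⟩ := h2
      rw [Finset.mem_inter] at hℓ
      apply mul_eq_zero_of_right
      apply Finset.prod_eq_zero hℓ.1
      simp [hv, hℓ.2]
    rw [Finset.not_nonempty_iff_eq_empty] at h1 h2
    rcases hv' _ (hmemF j h1 h2) with ⟨ℓ, hℓ, hvℓ⟩ | ⟨ℓ, hℓ, hvℓ⟩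
    · rw [Finset.mem_sdiff] at hℓ
      apply mul_eq_zero_of_left
      apply Finset.prod_eq_zero hℓ.1
      have hb : ℓ ∉ b := fun c => by simpa using (Finset.eq_empty_iff_forall_notMem.mp h1 ℓ (Finset.mem_inter.mpr ⟨hℓ.1, c⟩))
      simp [hv, hℓ.2, hb, hvℓ]
    · rw [Finset.mem_sdiff] at hℓ
      apply mul_eq_zero_of_right
      apply Finset.prod_eq_zero hℓ.1
      have ha : ℓ ∉ a := fun c => by simpa using (Finset.eq_empty_iff_forall_notMem.mp h2 ℓ (Finset.mem_inter.mpr ⟨hℓ.1, c⟩))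
      simp [hv, hℓ.2, ha, hvℓ]
  have hmap : eval v (psm n a b) ∈ Ideal.map (eval v) (Ideal.span (Set.range g)) :=
    Ideal.mem_map_of_mem _ hmem
  rw [Ideal.map_span] at hmap
  have hbot : Ideal.span ((eval v : MvPolynomial (Fin n) (ZMod 2) →+* ZMod 2) '' Set.range g) ≤ ⊥ := by
    rw [Ideal.span_le]
    rintro x ⟨y, ⟨j, rfl⟩, rfl⟩
    simpa using heval0 j
  have := hbot hmap
  rw [Submodule.mem_bot] at this
  rw [heval1] at this
  exact one_ne_zero this


/-- Theorem (main theorem, positive direction): if for every pair of generators sharing exactly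
one index `i` some generator divides `[g_{j₁}g_{j₂}]/(xᵢyᵢ)`, then the presentation is in
canonical form. -/
theorem stmt1 {n k : ℕ} (hn : 0 < n) (hk : 1 ≤ k)
    (σ τ : Fin k → Finset (Fin n))
    (hdisj : ∀ j, Disjoint (σ j) (τ j))
    (g : Fin k → MvPolynomial (Fin n) (ZMod 2))
    (hg : ∀ j, g j = psm n (σ j) (τ j))
    (hnd : ∀ j₁ j₂ : Fin k, j₁ ≠ j₂ → ¬ g j₁ ∣ g j₂)
    (hmain : ∀ j₁ j₂ : Fin k, j₁ ≠ j₂ → ∀ i : Fin n,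
      (σ j₁ ∩ τ j₂) ∪ (σ j₂ ∩ τ j₁) = {i} →
      ∃ j₃ : Fin k, g j₃ ∣ psm n ((σ j₁ ∪ σ j₂) \ {i}) ((τ j₁ ∪ τ j₂) \ {i})) :
    CF (Ideal.span (Set.range g)) = Set.range g := by
  ext f
  simp only [CF, Set.mem_setOf_eq]
  constructor
  · rintro ⟨⟨A, B, hAB, rfl⟩, hfJ, hmin⟩
    obtain ⟨j, hj⟩ := crux σ τ hdisj g hg hmain A B hAB hfJ
    by_cases he : g j = psm n A B
    · exact ⟨j, he⟩
    · have hgJ : g j ∈ Ideal.span (Set.range g) := Ideal.subset_span (Set.mem_range_self j)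
      exact absurd hgJ (hmin (g j) ⟨σ j, τ j, hdisj j, hg j⟩ hj he)
  · rintro ⟨j, rfl⟩
    refine ⟨⟨σ j, τ j, hdisj j, hg j⟩, Ideal.subset_span ⟨j, rfl⟩, ?_⟩
    rintro p ⟨A, B, hAB, rfl⟩ hdvd hne hpJ
    obtain ⟨j', hj'⟩ := crux σ τ hdisj g hg hmain A B hAB hpJ
    by_cases hjj : j' = j
    · subst hjj
      have s1 : A ⊆ σ j' ∧ B ⊆ τ j' := subset_of_psm_dvd (hdisj j') (by rw [← hg j']; exact hdvd)
      have s2 : σ j' ⊆ A ∧ τ j' ⊆ B := subset_of_psm_dvd hAB (by rw [← hg j']; exact hj')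
      apply hne
      rw [hg j', Finset.Subset.antisymm s1.1 s2.1, Finset.Subset.antisymm s1.2 s2.2]
    · exact absurd (hj'.trans hdvd) (hnd j' j hjj)
end
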